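/- arXiv:0710.5718 — 4 statements merged into one kernel-verified Lean document; each statement's English description precedes it below -/
import Mathlib

section
/- Let σ = conv{a₀,…,aₙ} be the closed convex hull of affinely independent points a₀,…,aₙ in R^m, and let r₀,…,rₙ, s₀,…,sₙ ∈ R satisfy rⱼ ≤ sⱼ for all j. Set bⱼ = (aⱼ, rⱼ) and cⱼ = (aⱼ, sⱼ) in R^{m+1}. Then for any index j with bⱼ ≠ cⱼ (i.e. rⱼ < sⱼ), the n+2 points b₀,…,bⱼ, cⱼ,…,cₙ are affinely independent in R^{m+1}. -/
/-- lifting affinely independent points. If `a 0, …, a n` are affinely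
independent in `ℝ^m`, `r j ≤ s j`, `b j = (a j, r j)`, `c j = (a j, s j)`, and `r j < s j`
for a fixed index `j`, then the `n+2` points `b 0, …, b j, c j, …, c n` are affinely
independent in `ℝ^{m+1} = ℝ^m × ℝ`. -/
theorem stmt_0 (m n : ℕ) (a : Fin (n + 1) → (Fin m → ℝ))
    (ha : AffineIndependent ℝ a)
    (r s : Fin (n + 1) → ℝ) (hrs : ∀ j, r j ≤ s j)
    (j : Fin (n + 1)) (hj : r j < s j)
    (b c : Fin (n + 1) → (Fin m → ℝ) × ℝ)
    (hb : ∀ i, b i = (a i, r i)) (hc : ∀ i, c i = (a i, s i)) :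
    AffineIndependent ℝ (fun k : Fin (n + 2) =>
      if hk : (k : ℕ) ≤ (j : ℕ) then b ⟨(k : ℕ), by omega⟩
      else c ⟨(k : ℕ) - 1, by omega⟩) := by
  classical
  set p : Fin (n + 2) → (Fin m → ℝ) × ℝ := fun k =>
      if hk : (k : ℕ) ≤ (j : ℕ) then b ⟨(k : ℕ), by omega⟩
      else c ⟨(k : ℕ) - 1, by omega⟩ with hp
  rw [affineIndependent_iff] at ha ⊢
  intro t w hwsum hvsum
  set W : Fin (n + 2) → ℝ := fun k => if k ∈ t then w k else 0 with hW
  have hWsum : ∑ k, W k = 0 := by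
    rw [hW]
    simp only [Finset.sum_ite_mem, Finset.univ_inter]
    exact hwsum
  have hWvsum : ∑ k, W k • p k = 0 := by
    have : ∑ k, W k • p k = ∑ k ∈ t, w k • p k := by
      rw [hW]
      simp only [ite_smul, zero_smul, Finset.sum_ite_mem, Finset.univ_inter]
    rw [this]; exact hvsum
  suffices hall : ∀ k, W k = 0 by
    intro e he
    have := hall e
    simpa [hW, he] using this
  -- description of the points
  have hsA : ∀ i : Fin (n + 1),
      p (Fin.succAbove j.succ i) = (a i, if (i : ℕ) ≤ (j : ℕ) then r i else s i) := by
    intro i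
    rcases le_or_gt (i : ℕ) (j : ℕ) with h | h
    · have h1 : Fin.succAbove j.succ i = i.castSucc := by
        apply Fin.succAbove_of_castSucc_lt
        rw [Fin.lt_def]
        simp only [Fin.coe_castSucc, Fin.val_succ]
        omega
      rw [h1, hp]
      simp only [Fin.coe_castSucc]
      rw [dif_pos h, hb]
      simp [h]
    · have h1 : Fin.succAbove j.succ i = i.succ := by
        apply Fin.succAbove_of_le_castSucc
        rw [Fin.le_def]
        simp only [Fin.coe_castSucc, Fin.val_succ]
        omega
      rw [h1, hp]
      simp only [Fin.val_succ]
      rw [dif_neg (by omega), hc, if_neg (show ¬ (i : ℕ) ≤ (j : ℕ) by omega)]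
      have he : (⟨(i : ℕ) + 1 - 1, by omega⟩ : Fin (n + 1)) = i := by ext; simp
      rw [he]
  have hjsucc : p j.succ = (a j, s j) := by
    rw [hp]
    simp only [Fin.val_succ]
    rw [dif_neg (by omega), hc]
    simp [Nat.add_sub_cancel]
  -- collapsed weights
  set v : Fin (n + 1) → ℝ := fun i =>
      W (Fin.succAbove j.succ i) + if i = j then W j.succ else 0 with hv
  have hvsum0 : ∑ i, v i = 0 := by
    rw [hv]
    rw [Finset.sum_add_distrib, Finset.sum_ite_eq' Finset.univ j (fun _ => W j.succ)]
    simp only [Finset.mem_univ, if_true]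
    rw [Fin.sum_univ_succAbove W j.succ] at hWsum
    linarith
  have hfst : ∑ k, W k • (p k).1 = 0 := by
    have := congrArg Prod.fst hWvsum
    simpa [Prod.fst_sum] using this
  have hsnd : ∑ k, W k • (p k).2 = 0 := by
    have := congrArg Prod.snd hWvsum
    simpa [Prod.snd_sum] using this
  have hvlin : ∑ i, v i • a i = 0 := by
    rw [hv]
    have expand : ∑ i : Fin (n + 1),
        (W (Fin.succAbove j.succ i) + if i = j then W j.succ else 0) • a i
        = ∑ i : Fin (n + 1), W (Fin.succAbove j.succ i) • a i + W j.succ • a j := by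
      rw [Finset.sum_congr rfl (fun i _ => add_smul _ _ (a i)), Finset.sum_add_distrib]
      congr 1
      rw [Finset.sum_eq_single j]
      · simp
      · intro i _ hi; simp [hi]
      · simp
    rw [expand]
    rw [Fin.sum_univ_succAbove (fun k => W k • (p k).1) j.succ] at hfst
    rw [hjsucc] at hfst
    have : ∑ i : Fin (n + 1), W (Fin.succAbove j.succ i) • a i
        = ∑ i : Fin (n + 1), W (Fin.succAbove j.succ i) • (p (Fin.succAbove j.succ i)).1 := by
      apply Finset.sum_congr rfl
      intro i _
      rw [hsA i]
    rw [this]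
    rw [add_comm] at hfst
    exact hfst
  have hv0 : ∀ i, v i = 0 := fun i =>
    ha Finset.univ v hvsum0 hvlin i (Finset.mem_univ i)
  -- extract individual vanishing
  have hne : ∀ i : Fin (n + 1), i ≠ j → W (Fin.succAbove j.succ i) = 0 := by
    intro i hi
    have := hv0 i
    rw [hv] at this
    simpa [hi] using this
  have hsAj : Fin.succAbove j.succ j = j.castSucc := by
    apply Fin.succAbove_of_castSucc_lt
    rw [Fin.lt_def]
    simp only [Fin.coe_castSucc, Fin.val_succ]
    omega
  have hjj : W j.castSucc + W j.succ = 0 := by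
    have := hv0 j
    rw [hv] at this
    simpa [hsAj] using this
  -- second coordinate
  have hsnd' : W j.succ * s j + W j.castSucc * r j = 0 := by
    rw [Fin.sum_univ_succAbove (fun k => W k • (p k).2) j.succ] at hsnd
    rw [hjsucc] at hsnd
    have : ∑ i : Fin (n + 1), W (Fin.succAbove j.succ i) • (p (Fin.succAbove j.succ i)).2
        = W j.castSucc * r j := by
      rw [Finset.sum_eq_single j]
      · rw [hsA j, hsAj]
        simp [smul_eq_mul]
      · intro i _ hi
        rw [hne i hi]
        simp
      · simp
    rw [this] at hsnd
    simpa [smul_eq_mul] using hsnd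
  have hWjs : W j.succ = 0 := by
    have hWc : W j.castSucc = -W j.succ := by linarith
    rw [hWc] at hsnd'
    have : W j.succ * (s j - r j) = 0 := by ring_nf; ring_nf at hsnd'; linarith
    have hne' : s j - r j ≠ 0 := by linarith
    exact (mul_eq_zero.mp this).resolve_right hne'
  have hWc : W j.castSucc = 0 := by linarith
  intro k
  by_cases hk : k = j.succ
  · rw [hk]; exact hWjs
  · obtain ⟨i, hi⟩ := Fin.exists_succAbove_eq hk
    by_cases hij : i = j
    · rw [← hi, hij, hsAj]; exact hWc
    · rw [← hi]; exact hne i hij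
end

section
/- Let K be a finite collection of open simplices in ℝ^m such that (i) every face of a simplex of K belongs to K, and (ii) every pair of distinct simplices of K are disjoint. Then for any two simplices σ, τ ∈ K with closures meeting, closure(σ) ∩ closure(τ) equals the closed face of σ spanned by those vertices of σ that are also vertices of τ (so K is a closed simplicial complex). -/
/-!
A point of the closed simplex `conv V` lies in the open face spanned by the vertices carrying
positive weight. So a point of `closure σ ∩ closure τ = conv Vert σ ∩ conv Vert τ` lies in an open
face of `σ` and in an open face of `τ`; both faces belong to `K` and meet, hence coincide, and
their vertices are common vertices of `σ` and `τ`.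
-/

/-- The open simplex spanned by a finite set `V` of points: strictly positive barycentric
combinations of the elements of `V`. -/
def openSimplexOf {m : ℕ} (V : Finset (Fin m → ℝ)) : Set (Fin m → ℝ) :=
  {x | ∃ w : (Fin m → ℝ) → ℝ, (∀ v ∈ V, 0 < w v) ∧
    ∑ v ∈ V, w v = 1 ∧ ∑ v ∈ V, w v • v = x}

section OpenSimplex

variable {m : ℕ} {V : Finset (Fin m → ℝ)}

lemma openSimplexOf_subset_convexHull (V : Finset (Fin m → ℝ)) :
    openSimplexOf V ⊆ convexHull ℝ (V : Set (Fin m → ℝ)) := by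
  rintro x ⟨w, hpos, hsum, hx⟩
  exact Finset.mem_convexHull'.2 ⟨w, fun v hv => (hpos v hv).le, hsum, hx⟩

lemma openSimplexOf_nonempty (hV : V.Nonempty) : (openSimplexOf V).Nonempty := by
  have hcard : (V.card : ℝ) ≠ 0 := by exact_mod_cast hV.card_pos.ne'
  refine ⟨_, fun _ => (V.card : ℝ)⁻¹, fun _ _ => by positivity, ?_, rfl⟩
  rw [Finset.sum_const, nsmul_eq_mul, mul_inv_cancel₀ hcard]

lemma openSegment_subset_openSimplexOf {x y : Fin m → ℝ} (hy : y ∈ openSimplexOf V)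
    (hx : x ∈ convexHull ℝ (V : Set (Fin m → ℝ))) : openSegment ℝ y x ⊆ openSimplexOf V := by
  obtain ⟨wy, hwy_pos, hwy_sum, rfl⟩ := hy
  obtain ⟨wx, hwx_nonneg, hwx_sum, rfl⟩ := Finset.mem_convexHull'.1 hx
  rintro _ ⟨a, b, ha, hb, hab, rfl⟩
  refine ⟨fun v => a * wy v + b * wx v, fun v hv => ?_, ?_, ?_⟩
  · have := hwx_nonneg v hv
    have := hwy_pos v hv
    positivity
  · rw [Finset.sum_add_distrib, ← Finset.mul_sum, ← Finset.mul_sum, hwy_sum, hwx_sum, mul_one,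
      mul_one, hab]
  · simp only [add_smul, mul_smul, Finset.sum_add_distrib, Finset.smul_sum]

lemma closure_openSimplexOf (V : Finset (Fin m → ℝ)) :
    closure (openSimplexOf V) = convexHull ℝ (V : Set (Fin m → ℝ)) := by
  refine subset_antisymm (closure_minimal (openSimplexOf_subset_convexHull V)
    (V.finite_toSet.isClosed_convexHull (𝕜 := ℝ))) fun x hx => ?_
  have hV : V.Nonempty := by simpa using convexHull_nonempty_iff.1 ⟨x, hx⟩
  obtain ⟨y, hy⟩ := openSimplexOf_nonempty hV
  exact closure_mono (openSegment_subset_openSimplexOf hy hx)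
    (segment_subset_closure_openSegment (right_mem_segment ℝ y x))

lemma nonempty_of_mem_openSimplexOf {x : Fin m → ℝ} (hx : x ∈ openSimplexOf V) :
    V.Nonempty := by
  obtain ⟨w, -, hsum, -⟩ := hx
  by_contra h
  simp [Finset.not_nonempty_iff_eq_empty.1 h] at hsum

lemma exists_subset_mem_openSimplexOf {x : Fin m → ℝ}
    (hx : x ∈ convexHull ℝ (V : Set (Fin m → ℝ))) :
    ∃ V' ⊆ V, x ∈ openSimplexOf V' := by
  obtain ⟨w, hw_nonneg, hw_sum, hwx⟩ := Finset.mem_convexHull'.1 hx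
  have hsupp : ∀ v ∈ V, w v ≠ 0 → 0 < w v := fun v hv h => (hw_nonneg v hv).lt_of_ne' h
  refine ⟨V.filter (fun v => 0 < w v), Finset.filter_subset _ _, w,
    fun v hv => (Finset.mem_filter.1 hv).2, ?_, ?_⟩
  · rwa [Finset.sum_filter_of_ne hsupp]
  · rwa [Finset.sum_filter_of_ne fun v hv h => hsupp v hv (left_ne_zero_of_smul h)]

end OpenSimplex

theorem stmt_5_general (m : ℕ) (K : Set (Finset (Fin m → ℝ)))
    (hfaces : ∀ V ∈ K, ∀ W : Finset (Fin m → ℝ), W ⊆ V → W.Nonempty → W ∈ K)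
    (hdisj : ∀ V ∈ K, ∀ W ∈ K, V ≠ W → openSimplexOf V ∩ openSimplexOf W = ∅) :
    ∀ V ∈ K, ∀ W ∈ K,
      closure (openSimplexOf V) ∩ closure (openSimplexOf W)
        = convexHull ℝ ((V ∩ W : Finset (Fin m → ℝ)) : Set (Fin m → ℝ)) := by
  intro V hV W hW
  rw [closure_openSimplexOf, closure_openSimplexOf]
  refine subset_antisymm (fun x ⟨hxV, hxW⟩ => ?_)
    (Set.subset_inter (convexHull_mono (Finset.coe_subset.2 Finset.inter_subset_left))
      (convexHull_mono (Finset.coe_subset.2 Finset.inter_subset_right)))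
  obtain ⟨V', hV'V, hxV'⟩ := exists_subset_mem_openSimplexOf hxV
  obtain ⟨W', hW'W, hxW'⟩ := exists_subset_mem_openSimplexOf hxW
  have hV'W' : V' = W' := by
    by_contra hne
    have hV'K := hfaces V hV V' hV'V (nonempty_of_mem_openSimplexOf hxV')
    have hW'K := hfaces W hW W' hW'W (nonempty_of_mem_openSimplexOf hxW')
    exact (hdisj V' hV'K W' hW'K hne).subset ⟨hxV', hxW'⟩
  subst hV'W'
  exact convexHull_mono (Finset.coe_subset.2 (Finset.subset_inter hV'V hW'W))
    (openSimplexOf_subset_convexHull V' hxV')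

/-- let `K` be a finite collection of open simplices (given by their vertex
sets, which are nonempty and affinely independent) such that every face of a simplex of
`K` is in `K` and distinct simplices of `K` are disjoint. Then for any `σ, τ ∈ K`,
`closure σ ∩ closure τ` is the closed face spanned by the common vertices,
i.e. `convexHull ℝ (Vert σ ∩ Vert τ)` (so `K` is a closed simplicial complex). -/
theorem stmt_5 (m : ℕ) (K : Set (Finset (Fin m → ℝ))) (hKfin : K.Finite)
    (hne : ∀ V ∈ K, V.Nonempty)
    (hindep : ∀ V ∈ K, AffineIndependent ℝ (fun v : {x // x ∈ V} => (v : Fin m → ℝ)))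
    (hfaces : ∀ V ∈ K, ∀ W : Finset (Fin m → ℝ), W ⊆ V → W.Nonempty → W ∈ K)
    (hdisj : ∀ V ∈ K, ∀ W ∈ K, V ≠ W → openSimplexOf V ∩ openSimplexOf W = ∅) :
    ∀ V ∈ K, ∀ W ∈ K,
      closure (openSimplexOf V) ∩ closure (openSimplexOf W)
        = convexHull ℝ ((V ∩ W : Finset (Fin m → ℝ)) : Set (Fin m → ℝ)) :=
  stmt_5_general m K hfaces hdisj
end

section
/- Let σ = (a₀,…,a_{n}) be an open simplex with barycenter σ̂, let τ be an open simplex contained in the frontier ∂σ, and let φ : closure(τ) → ∂σ be a continuous injective map. Then the map h : [τ, σ̂] → closure(σ) defined on the cone [τ,σ̂] = {(1−t)u + t·σ̂ : u ∈ closure(τ), t ∈ [0,1]} by h((1−t)u + t·σ̂) = (1−t)φ(u) + t·σ̂ is well-defined, continuous, and injective, with image contained in closure(σ). -/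
/-!
Let `c` be continuous barycentric coordinates of `σ` (a left inverse of the injective linear map
`w ↦ (∑ wᵢ aᵢ, ∑ wᵢ)`) and `T = (n + 1) · minᵢ cᵢ`. A point of `∂σ` has a vanishing coordinate, so
`T ((1 - t) u + t σ̂) = t` for `u ∈ ∂σ`: the continuous function `T` reads off the cone parameter
of a point `p` of the cone, and `(1 - T p)⁻¹ (p - T p σ̂)` its base point. Written through them,
`h` is well defined and continuous away from the apex; at the apex
`‖h p - σ̂‖ ≤ (1 - T p) · sup ‖φ - σ̂‖`, finite since `∂σ` is bounded. Since `φ` maps into `∂σ`,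
`h` preserves `T`, so injectivity of `h` reduces to that of `φ`.
-/

/-- The open simplex spanned by the points `a 0, …, a n`. -/
def openSimplex {m n : ℕ} (a : Fin (n + 1) → (Fin m → ℝ)) : Set (Fin m → ℝ) :=
  {x | ∃ t : Fin (n + 1) → ℝ, (∀ i, 0 < t i) ∧ ∑ i, t i = 1 ∧ ∑ i, t i • a i = x}

open Set Finset Filter Topology

theorem AffineIndependent.exists_continuous_coords {ι E : Type*} [Fintype ι]
    [NormedAddCommGroup E] [NormedSpace ℝ E] [FiniteDimensional ℝ E] {a : ι → E}
    (ha : AffineIndependent ℝ a) :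
    ∃ c : E → ι → ℝ, Continuous c ∧
      ∀ w : ι → ℝ, ∑ i, w i = 1 → c (∑ i, w i • a i) = w := by
  let L : (ι → ℝ) →ₗ[ℝ] E × ℝ :=
    (Fintype.linearCombination ℝ a).prod (Fintype.linearCombination ℝ fun _ => (1 : ℝ))
  have hL : ∀ w, L w = (∑ i, w i • a i, ∑ i, w i) := fun w => by
    simp [L, Fintype.linearCombination_apply]
  have hker : LinearMap.ker L = ⊥ := by
    refine LinearMap.ker_eq_bot'.2 fun w hw => funext fun i => ?_
    rw [hL, Prod.mk_eq_zero] at hw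
    exact ha.eq_zero_of_sum_eq_zero hw.2 hw.1 i (mem_univ i)
  obtain ⟨g, hg⟩ := L.exists_leftInverse_of_injective hker
  refine ⟨fun x => g (x, 1), g.continuous_of_finiteDimensional.comp (.prodMk_left 1),
    fun w hw => ?_⟩
  simpa [hL, hw] using LinearMap.congr_fun hg w

noncomputable section ConeMap

variable {E : Type*} [NormedAddCommGroup E] [NormedSpace ℝ E]

def coneOver (S : Set E) (b : E) : Set E :=
  {p | ∃ u ∈ S, ∃ t ∈ Icc (0 : ℝ) 1, p = (1 - t) • u + t • b}

def IsConeParameter (T : E → ℝ) (S : Set E) (b : E) : Prop :=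
  ∀ u ∈ S, ∀ t ∈ Icc (0 : ℝ) 1, T ((1 - t) • u + t • b) = t

def coneBase (T : E → ℝ) (b p : E) : E :=
  (1 - T p)⁻¹ • (p - T p • b)

def coneMap (T : E → ℝ) (b : E) (φ : E → E) (p : E) : E :=
  (1 - T p) • φ (coneBase T b p) + T p • b

variable {S B : Set E} {T : E → ℝ} {b : E} {φ : E → E}

theorem coneBase_apply {u : E} {t : ℝ} (hT : T ((1 - t) • u + t • b) = t) (ht : 1 - t ≠ 0) :
    coneBase T b ((1 - t) • u + t • b) = u := by
  rw [coneBase, hT, add_sub_cancel_right, smul_smul, inv_mul_cancel₀ ht, one_smul]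

theorem coneMap_apply {u : E} {t : ℝ} (hT : T ((1 - t) • u + t • b) = t) :
    coneMap T b φ ((1 - t) • u + t • b) = (1 - t) • φ u + t • b := by
  rcases eq_or_ne (1 - t) 0 with ht | ht
  · obtain rfl : t = 1 := by linarith
    rw [coneMap, hT, sub_self, zero_smul, zero_smul]
  · rw [coneMap, coneBase_apply hT ht, hT]

theorem coneBase_mem_of_lt_one (hT : IsConeParameter T S b) {p : E}
    (hp : p ∈ coneOver S b) (hp1 : T p < 1) :
    coneBase T b p ∈ S := by
  obtain ⟨u, hu, t, ht, rfl⟩ := hp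
  rw [hT u hu t ht] at hp1
  rwa [coneBase_apply (hT u hu t ht) (by linarith)]

theorem continuousWithinAt_coneMap_of_lt_one (hT : IsConeParameter T S b)
    (hTc : Continuous T) (hφ : ContinuousOn φ S)
    {p : E} (hp : p ∈ coneOver S b) (hp1 : T p < 1) :
    ContinuousWithinAt (coneMap T b φ) (coneOver S b) p := by
  have hnhds : {q | T q < 1} ∈ 𝓝 p := (isOpen_lt hTc continuous_const).mem_nhds hp1
  have hbase : ContinuousAt (coneBase T b) p := by
    unfold coneBase
    fun_prop (disch := exact (sub_pos.2 hp1).ne')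
  have hφbase :
      ContinuousWithinAt (fun q => φ (coneBase T b q)) (coneOver S b ∩ {q | T q < 1}) p :=
    (hφ _ (coneBase_mem_of_lt_one hT hp hp1)).comp hbase.continuousWithinAt
      fun q hq => coneBase_mem_of_lt_one hT hq.1 hq.2
  rw [← continuousWithinAt_inter hnhds]
  exact (((continuous_const.sub hTc).continuousWithinAt).smul hφbase).add
    (hTc.smul continuous_const).continuousWithinAt

theorem continuousWithinAt_coneMap_apex (hT : IsConeParameter T S b)
    (hTc : Continuous T)
    (hφ : Bornology.IsBounded (φ '' S)) (hb : T b = 1) :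
    ContinuousWithinAt (coneMap T b φ) (coneOver S b) b := by
  obtain ⟨R, hR⟩ := (hφ.vadd (-b)).exists_norm_le
  have hbound : ∀ q ∈ coneOver S b, ‖coneMap T b φ q - b‖ ≤ (1 - T q) * R := by
    rintro q ⟨u, hu, t, ht, rfl⟩
    have hdiff : coneMap T b φ ((1 - t) • u + t • b) - b = (1 - t) • (φ u - b) := by
      rw [coneMap_apply (hT u hu t ht)]; module
    rw [hdiff, norm_smul, Real.norm_of_nonneg (by linarith [ht.2]), hT u hu t ht]
    exact mul_le_mul_of_nonneg_left (hR _ ⟨_, mem_image_of_mem φ hu, by simp [sub_eq_neg_add]⟩)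
      (by linarith [ht.2])
  have hlim :
      Tendsto (fun q => (1 - T q) * R) (𝓝[coneOver S b] b) (𝓝 0) := by
    have : Tendsto (fun q => (1 - T q) * R) (𝓝 b) (𝓝 ((1 - T b) * R)) :=
      ((continuous_const.sub hTc).mul continuous_const).tendsto b
    rw [hb, sub_self, zero_mul] at this
    exact this.mono_left nhdsWithin_le_nhds
  have hapex : coneMap T b φ b = b := by
    rw [coneMap, hb, sub_self, zero_smul, one_smul, zero_add]
  rw [ContinuousWithinAt, tendsto_iff_norm_sub_tendsto_zero, hapex]
  exact squeeze_zero' (.of_forall fun q => norm_nonneg _)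
    (eventually_nhdsWithin_of_forall hbound) hlim

theorem continuousOn_coneMap (hT : IsConeParameter T S b)
    (hTc : Continuous T) (hφc : ContinuousOn φ S)
    (hφb : Bornology.IsBounded (φ '' S)) : ContinuousOn (coneMap T b φ) (coneOver S b) := by
  rintro p hp
  obtain ⟨u, hu, t, ht, rfl⟩ := id hp
  rcases ht.2.lt_or_eq with ht1 | rfl
  · exact continuousWithinAt_coneMap_of_lt_one hT hTc hφc hp (by rwa [hT u hu t ht])
  · have hb : T b = 1 := by simpa using hT u hu 1 (right_mem_Icc.2 zero_le_one)
    simpa using continuousWithinAt_coneMap_apex hT hTc hφb hb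

theorem mapsTo_coneMap (hT : IsConeParameter T S b)
    {C : Set E} (hC : Convex ℝ C) (hbC : b ∈ C) (hφC : MapsTo φ S C) :
    MapsTo (coneMap T b φ) (coneOver S b) C := by
  rintro _ ⟨u, hu, t, ht, rfl⟩
  rw [coneMap_apply (hT u hu t ht)]
  exact hC (hφC hu) hbC (by linarith [ht.2]) ht.1 (by ring)

theorem injOn_coneMap (hT : IsConeParameter T B b)
    (hSB : S ⊆ B) (hφB : MapsTo φ S B) (hφi : InjOn φ S) :
    InjOn (coneMap T b φ) (coneOver S b) := by
  rintro _ ⟨u, hu, t, ht, rfl⟩ _ ⟨v, hv, s, hs, rfl⟩ h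
  rw [coneMap_apply (hT u (hSB hu) t ht), coneMap_apply (hT v (hSB hv) s hs)] at h
  obtain rfl : t = s := by
    rw [← hT _ (hφB hu) t ht, ← hT _ (hφB hv) s hs, h]
  rcases eq_or_ne (1 - t) 0 with ht1 | ht1
  · rw [ht1, zero_smul, zero_smul]
  · rw [hφi hu hv (smul_right_injective E ht1 (add_right_cancel h))]

end ConeMap

noncomputable section Simplex

variable {m n : ℕ} {a : Fin (n + 1) → (Fin m → ℝ)}

theorem convex_openSimplex : Convex ℝ (openSimplex a) := by
  rintro _ ⟨s, hs0, hs1, rfl⟩ _ ⟨t, ht0, ht1, rfl⟩ α β hα hβ hαβ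
  refine ⟨fun i => α * s i + β * t i,
    fun i => convex_Ioi (0 : ℝ) (hs0 i) (ht0 i) hα hβ hαβ, ?_, ?_⟩
  · simp [sum_add_distrib, ← mul_sum, hs1, ht1, hαβ]
  · simp only [add_smul, mul_smul, sum_add_distrib, ← smul_sum]

theorem barycenter_mem_openSimplex : ((n : ℝ) + 1)⁻¹ • ∑ i, a i ∈ openSimplex a :=
  ⟨fun _ => ((n : ℝ) + 1)⁻¹, fun _ => by positivity, by simp; field_simp, by rw [smul_sum]⟩

theorem isBounded_openSimplex : Bornology.IsBounded (openSimplex a) := by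
  refine ((Set.finite_range a).isCompact_convexHull ℝ).isBounded.subset ?_
  rintro _ ⟨t, ht0, ht1, rfl⟩
  exact (convex_convexHull ℝ _).sum_mem (fun i _ => (ht0 i).le) ht1
    fun i _ => subset_convexHull ℝ _ (mem_range_self i)

variable {c : (Fin m → ℝ) → Fin (n + 1) → ℝ}

theorem coords_of_mem_closure_openSimplex (hcc : Continuous c)
    (hc : ∀ w : Fin (n + 1) → ℝ, ∑ i, w i = 1 → c (∑ i, w i • a i) = w)
    {x : Fin m → ℝ} (hx : x ∈ closure (openSimplex a)) :
    (∀ i, 0 ≤ c x i) ∧ ∑ i, c x i = 1 ∧ ∑ i, c x i • a i = x := by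
  refine closure_minimal
    (t := {x | (∀ i, 0 ≤ c x i) ∧ ∑ i, c x i = 1 ∧ ∑ i, c x i • a i = x}) ?_ ?_ hx
  · rintro _ ⟨t, ht0, ht1, rfl⟩
    rw [mem_ofPred_eq, hc t ht1]
    exact ⟨fun i => (ht0 i).le, ht1, rfl⟩
  · simp only [ofPred_and, ofPred_forall]
    refine (isClosed_iInter fun i => isClosed_le continuous_const ?_).inter
      ((isClosed_eq ?_ continuous_const).inter (isClosed_eq ?_ continuous_id)) <;> fun_prop

def simplexHeight (c : (Fin m → ℝ) → Fin (n + 1) → ℝ) (x : Fin m → ℝ) : ℝ :=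
  (n + 1) * univ.inf' univ_nonempty (c x)

theorem continuous_simplexHeight (hcc : Continuous c) : Continuous (simplexHeight c) :=
  continuous_const.mul (Continuous.finset_inf'_apply _ fun i _ => (continuous_apply i).comp hcc)

theorem simplexHeight_segment_barycenter (hcc : Continuous c)
    (hc : ∀ w : Fin (n + 1) → ℝ, ∑ i, w i = 1 → c (∑ i, w i • a i) = w)
    {u : Fin m → ℝ} (hu : u ∈ closure (openSimplex a) \ openSimplex a)
    {t : ℝ} (ht : t ≤ 1) :
    simplexHeight c ((1 - t) • u + t • (((n : ℝ) + 1)⁻¹ • ∑ i, a i)) = t := by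
  obtain ⟨hu0, hu1, hua⟩ := coords_of_mem_closure_openSimplex hcc hc hu.1
  obtain ⟨i, hi⟩ : ∃ i, c u i ≤ 0 := by
    by_contra! hpos
    exact hu.2 ⟨c u, hpos, hu1, hua⟩
  set w : Fin (n + 1) → ℝ := fun i => (1 - t) * c u i + t * ((n : ℝ) + 1)⁻¹
  have hw : ∑ i, w i = 1 := by
    simp only [w, sum_add_distrib, ← mul_sum, hu1, sum_const, card_univ, Fintype.card_fin,
      nsmul_eq_mul]
    field_simp
    push_cast
    ring
  have hpoint :
      (1 - t) • u + t • (((n : ℝ) + 1)⁻¹ • ∑ i, a i) = ∑ i, w i • a i := by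
    simp only [w, add_smul, mul_smul, sum_add_distrib, ← smul_sum, hua]
  have hmin : univ.inf' univ_nonempty w = t * ((n : ℝ) + 1)⁻¹ :=
    le_antisymm ((inf'_le _ (mem_univ i)).trans (by nlinarith))
      (le_inf' _ _ fun j _ => by nlinarith [hu0 j])
  rw [simplexHeight, hpoint, hc w hw, hmin]
  field_simp

end Simplex

theorem stmt_9_general (m n : ℕ) (a : Fin (n + 1) → (Fin m → ℝ))
    (ha : AffineIndependent ℝ a)
    (bary : Fin m → ℝ) (hbary : bary = ((n : ℝ) + 1)⁻¹ • ∑ i, a i)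
    (bdry : Set (Fin m → ℝ)) (hbdry : bdry = closure (openSimplex a) \ openSimplex a)
    (τ : Set (Fin m → ℝ))
    (hτbdry : closure τ ⊆ bdry)
    (φ : (Fin m → ℝ) → (Fin m → ℝ))
    (hφc : ContinuousOn φ (closure τ)) (hφi : Set.InjOn φ (closure τ))
    (hφb : ∀ u ∈ closure τ, φ u ∈ bdry)
    (cone : Set (Fin m → ℝ))
    (hcone : cone = {p | ∃ u ∈ closure τ, ∃ t ∈ Set.Icc (0:ℝ) 1,
      p = (1 - t) • u + t • bary}) :
    ∃ h : (Fin m → ℝ) → (Fin m → ℝ),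
      (∀ u ∈ closure τ, ∀ t ∈ Set.Icc (0:ℝ) 1,
        h ((1 - t) • u + t • bary) = (1 - t) • φ u + t • bary) ∧
      ContinuousOn h cone ∧
      Set.InjOn h cone ∧
      (∀ p ∈ cone, h p ∈ closure (openSimplex a)) := by
  obtain ⟨c, hcc, hc⟩ := ha.exists_continuous_coords
  subst hbary hbdry hcone
  have hT : IsConeParameter (simplexHeight c) (closure (openSimplex a) \ openSimplex a)
      (((n : ℝ) + 1)⁻¹ • ∑ i, a i) :=
    fun u hu t ht => simplexHeight_segment_barycenter hcc hc hu ht.2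
  have hTτ : IsConeParameter (simplexHeight c) (closure τ) _ := fun u hu => hT u (hτbdry hu)
  have hφσ : MapsTo φ (closure τ) (closure (openSimplex a)) := fun u hu => (hφb u hu).1
  refine ⟨coneMap (simplexHeight c) _ φ, fun u hu t ht => coneMap_apply (hTτ u hu t ht),
    continuousOn_coneMap hTτ (continuous_simplexHeight hcc) hφc
      (isBounded_openSimplex.closure.subset (mapsTo_iff_image_subset.1 hφσ)),
    injOn_coneMap hT hτbdry hφb hφi,
    mapsTo_coneMap hTτ convex_openSimplex.closure
      (subset_closure barycenter_mem_openSimplex) hφσ⟩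

/-- let `σ` be an open simplex (`n ≥ 1`) with barycenter `σ̂`, `τ` an open
simplex with `closure τ ⊆ ∂σ = closure σ \ σ`, and `φ : closure τ → ∂σ` continuous and
injective.  Then the cone map `h((1−t)•u + t•σ̂) = (1−t)•φ(u) + t•σ̂` on the cone
`[τ, σ̂]` is well defined, continuous and injective, with image in `closure σ`. -/
theorem stmt_9 (m n : ℕ) (hn : 1 ≤ n) (a : Fin (n + 1) → (Fin m → ℝ))
    (ha : AffineIndependent ℝ a)
    (bary : Fin m → ℝ) (hbary : bary = ((n : ℝ) + 1)⁻¹ • ∑ i, a i)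
    (bdry : Set (Fin m → ℝ)) (hbdry : bdry = closure (openSimplex a) \ openSimplex a)
    (V : Finset (Fin m → ℝ)) (hV : V.Nonempty)
    (hVindep : AffineIndependent ℝ (fun v : {x // x ∈ V} => (v : Fin m → ℝ)))
    (τ : Set (Fin m → ℝ)) (hτ : τ = openSimplexOf V)
    (hτbdry : closure τ ⊆ bdry)
    (φ : (Fin m → ℝ) → (Fin m → ℝ))
    (hφc : ContinuousOn φ (closure τ)) (hφi : Set.InjOn φ (closure τ))
    (hφb : ∀ u ∈ closure τ, φ u ∈ bdry)
    (cone : Set (Fin m → ℝ))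
    (hcone : cone = {p | ∃ u ∈ closure τ, ∃ t ∈ Set.Icc (0:ℝ) 1,
      p = (1 - t) • u + t • bary}) :
    ∃ h : (Fin m → ℝ) → (Fin m → ℝ),
      (∀ u ∈ closure τ, ∀ t ∈ Set.Icc (0:ℝ) 1,
        h ((1 - t) • u + t • bary) = (1 - t) • φ u + t • bary) ∧
      ContinuousOn h cone ∧
      Set.InjOn h cone ∧
      (∀ p ∈ cone, h p ∈ closure (openSimplex a)) :=
  stmt_9_general m n a ha bary hbary bdry hbdry τ hτbdry φ hφc hφi hφb cone hcone
end

section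
/- Let σ̂ be the barycenter of an open simplex σ ⊆ ℝ^m spanned by affinely independent a₀,…,aₙ. Then σ̂ ∈ σ, and for every point p ∈ closure(σ) with p ≠ σ̂ there exist a unique u ∈ ∂σ and a unique t ∈ [0,1) such that p = (1−t)u + t·σ̂. -/
/-!
Work in barycentric coordinates, where the barycenter is the constant vector `1 / (n + 1)` and
the boundary consists of the points of the standard simplex with a vanishing coordinate. If
`t = (1 - s) r + s σ̂` with `r` on the boundary and `s ≤ 1`, then `s / (n + 1)` is the least
coordinate of `t`; this fixes `s`, hence `r`, and conversely defines them (`s < 1` as `t ≠ σ̂`).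
Affine independence makes barycentric coordinates unique, which carries this over to `σ`.
-/

open Set

lemma isLeast_range_smul_add_smul_const {ι : Type*} {r : ι → ℝ} (hr : ∀ i, 0 ≤ r i) {j : ι}
    (hj : r j = 0) {s : ℝ} (hs : s ≤ 1) (κ : ℝ) :
    IsLeast (range ((1 - s) • r + s • fun _ => κ)) (s * κ) := by
  refine ⟨⟨j, by simp [hj]⟩, ?_⟩
  rintro _ ⟨i, rfl⟩
  have : 0 ≤ (1 - s) * r i := mul_nonneg (by linarith) (hr i)
  simp only [Pi.add_apply, Pi.smul_apply, smul_eq_mul]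
  linarith

section StdSimplex

variable (ι : Type*) [Fintype ι]

def openStdSimplex : Set (ι → ℝ) := {t | (∀ i, 0 < t i) ∧ ∑ i, t i = 1}

noncomputable def stdSimplexBarycenter : ι → ℝ := fun _ => (Fintype.card ι : ℝ)⁻¹

variable {ι}

lemma openStdSimplex_subset_stdSimplex : openStdSimplex ι ⊆ stdSimplex ℝ ι :=
  fun _ ht => ⟨fun i => (ht.1 i).le, ht.2⟩

lemma sum_stdSimplexBarycenter [Nonempty ι] : ∑ i, stdSimplexBarycenter ι i = 1 := by
  simp [stdSimplexBarycenter]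

lemma stdSimplexBarycenter_mem_openStdSimplex [Nonempty ι] :
    stdSimplexBarycenter ι ∈ openStdSimplex ι :=
  ⟨fun _ => by simp [stdSimplexBarycenter, Fintype.card_pos], sum_stdSimplexBarycenter⟩

lemma openSegment_subset_openStdSimplex {t c : ι → ℝ} (ht : t ∈ stdSimplex ℝ ι)
    (hc : c ∈ openStdSimplex ι) : openSegment ℝ t c ⊆ openStdSimplex ι := by
  rintro _ ⟨α, β, hα, hβ, hαβ, rfl⟩
  refine ⟨fun i => ?_, ?_⟩
  · have := ht.1 i
    have := hc.1 i
    simp only [Pi.add_apply, Pi.smul_apply, smul_eq_mul]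
    positivity
  · simp only [Pi.add_apply, Pi.smul_apply, smul_eq_mul, Finset.sum_add_distrib,
      ← Finset.mul_sum, ht.2, hc.2, mul_one, hαβ]

lemma closure_openStdSimplex [Nonempty ι] : closure (openStdSimplex ι) = stdSimplex ℝ ι := by
  refine (closure_minimal openStdSimplex_subset_stdSimplex (isClosed_stdSimplex ℝ ι)).antisymm
    fun t ht => ?_
  have hc := stdSimplexBarycenter_mem_openStdSimplex (ι := ι)
  exact closure_mono (openSegment_subset_openStdSimplex ht hc)
    (segment_subset_closure_openSegment (left_mem_segment ℝ t _))

lemma eq_stdSimplexBarycenter_of_forall_le [Nonempty ι] {t : ι → ℝ} (ht : t ∈ stdSimplex ℝ ι)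
    (hle : ∀ i, stdSimplexBarycenter ι i ≤ t i) : t = stdSimplexBarycenter ι := by
  have := (Finset.sum_eq_sum_iff_of_le fun i _ => hle i).mp
    (by rw [ht.2, sum_stdSimplexBarycenter])
  exact funext fun i => (this i (Finset.mem_univ i)).symm

lemma exists_eq_zero_of_mem_stdSimplex_sdiff {r : ι → ℝ}
    (hr : r ∈ stdSimplex ℝ ι \ openStdSimplex ι) : ∃ j, r j = 0 := by
  by_contra! h
  exact hr.2 ⟨fun i => (hr.1.1 i).lt_of_ne' (h i), hr.1.2⟩

lemma exists_eq_smul_add_smul_stdSimplexBarycenter [Nonempty ι] {t : ι → ℝ}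
    (ht : t ∈ stdSimplex ℝ ι) (hne : t ≠ stdSimplexBarycenter ι) :
    ∃ r ∈ stdSimplex ℝ ι \ openStdSimplex ι, ∃ s ∈ Ico (0 : ℝ) 1,
      t = (1 - s) • r + s • stdSimplexBarycenter ι := by
  obtain ⟨j, hj⟩ := Finite.exists_min t
  set N : ℝ := (Fintype.card ι : ℝ)
  have hN : 0 < N := Nat.cast_pos.2 Fintype.card_pos
  set s := N * t j
  have hs_center : s * N⁻¹ = t j := by rw [mul_comm]; exact inv_mul_cancel_left₀ hN.ne' _
  have hs1 : s < 1 := by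
    by_contra! h
    refine hne (eq_stdSimplexBarycenter_of_forall_le ht fun i => (hj i).trans' ?_)
    rw [← hs_center]
    exact le_mul_of_one_le_left (inv_nonneg.2 hN.le) h
  set r := (1 - s)⁻¹ • (t - s • stdSimplexBarycenter ι)
  have hr : ∀ i, r i = (1 - s)⁻¹ * (t i - t j) := by
    simp [r, stdSimplexBarycenter, hs_center, N]
  refine ⟨r, ⟨⟨fun i => ?_, ?_⟩, fun h => (h.1 j).ne' (by simp [hr])⟩, s,
    ⟨mul_nonneg hN.le (ht.1 j), hs1⟩, ?_⟩
  · rw [hr]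
    exact mul_nonneg (inv_nonneg.2 (by linarith)) (sub_nonneg.2 (hj i))
  · simp_rw [hr, ← Finset.mul_sum, Finset.sum_sub_distrib, ht.2, Finset.sum_const,
      Finset.card_univ, nsmul_eq_mul]
    exact inv_mul_cancel₀ (by linarith)
  · rw [smul_inv_smul₀ (by linarith), sub_add_cancel]

lemma existsUnique_eq_smul_add_smul_stdSimplexBarycenter [Nonempty ι] {t : ι → ℝ}
    (ht : t ∈ stdSimplex ℝ ι) (hne : t ≠ stdSimplexBarycenter ι) :
    ∃! rs : (ι → ℝ) × ℝ, rs.1 ∈ stdSimplex ℝ ι \ openStdSimplex ι ∧ rs.2 ∈ Ico (0 : ℝ) 1 ∧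
      t = (1 - rs.2) • rs.1 + rs.2 • stdSimplexBarycenter ι := by
  obtain ⟨r, hr, s, hs, hts⟩ := exists_eq_smul_add_smul_stdSimplexBarycenter ht hne
  refine ⟨(r, s), ⟨hr, hs, hts⟩, ?_⟩
  rintro ⟨r', s'⟩ ⟨hr', hs', hts'⟩
  dsimp only at hr' hs' hts'
  -- `s * κ` is the least barycentric coordinate of `t`, whatever the representation
  have hleast : ∀ r s, r ∈ stdSimplex ℝ ι \ openStdSimplex ι → s ∈ Ico (0 : ℝ) 1 →
      t = (1 - s) • r + s • stdSimplexBarycenter ι →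
      IsLeast (range t) (s * (Fintype.card ι : ℝ)⁻¹) := by
    rintro r s hr hs rfl
    obtain ⟨j, hj⟩ := exists_eq_zero_of_mem_stdSimplex_sdiff hr
    exact isLeast_range_smul_add_smul_const hr.1.1 hj hs.2.le _
  have hss' : s' = s := mul_right_cancel₀ (by simp)
    ((hleast r' s' hr' hs' hts').unique (hleast r s hr hs hts))
  subst hss'
  have : (1 - s') • r' = (1 - s') • r := add_right_cancel (hts'.symm.trans hts)
  rw [smul_right_injective _ (by linarith [hs.2]) this]

end StdSimplex

section LinearCombination

variable {ι E : Type*} [Fintype ι] [AddCommGroup E] [Module ℝ E] {a : ι → E}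

lemma AffineIndependent.injOn_linearCombination (ha : AffineIndependent ℝ a) :
    InjOn (Fintype.linearCombination ℝ a) {t | ∑ i, t i = 1} := by
  intro t ht r hr h
  refine (affineIndependent_iff_eq_of_fintype_affineCombination_eq ℝ a).1 ha t r ht hr ?_
  rwa [Finset.affineCombination_eq_linear_combination _ a t ht,
    Finset.affineCombination_eq_linear_combination _ a r hr]

lemma closure_image_openStdSimplex [Nonempty ι] [TopologicalSpace E] [IsTopologicalAddGroup E]
    [ContinuousSMul ℝ E] [T2Space E] (a : ι → E) :
    closure (Fintype.linearCombination ℝ a '' openStdSimplex ι)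
      = Fintype.linearCombination ℝ a '' stdSimplex ℝ ι := by
  rw [← image_closure_of_isCompact, closure_openStdSimplex]
  · rw [closure_openStdSimplex]
    exact isCompact_stdSimplex ℝ ι
  · exact (LinearMap.continuous_of_finiteDimensional _).continuousOn

end LinearCombination

lemma openSimplex_eq_image {m n : ℕ} (a : Fin (n + 1) → (Fin m → ℝ)) :
    openSimplex a = Fintype.linearCombination ℝ a '' openStdSimplex (Fin (n + 1)) := by
  ext x
  simp [openSimplex, openStdSimplex, Fintype.linearCombination_apply, and_assoc]

theorem stmt_16_general (m n : ℕ) (a : Fin (n + 1) → (Fin m → ℝ))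
    (ha : AffineIndependent ℝ a)
    (bary : Fin m → ℝ) (hbary : bary = ((n : ℝ) + 1)⁻¹ • ∑ i, a i) :
    bary ∈ openSimplex a ∧
    ∀ p ∈ closure (openSimplex a), p ≠ bary →
      ∃! ut : (Fin m → ℝ) × ℝ,
        ut.1 ∈ closure (openSimplex a) \ openSimplex a ∧
        ut.2 ∈ Set.Ico (0:ℝ) 1 ∧
        p = (1 - ut.2) • ut.1 + ut.2 • bary := by
  set f := Fintype.linearCombination ℝ a
  have hf_bary : f (stdSimplexBarycenter _) = bary := by
    simp [f, hbary, Fintype.linearCombination_apply, stdSimplexBarycenter, Finset.smul_sum]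
  have hinj : InjOn f {t | ∑ i, t i = 1} := ha.injOn_linearCombination
  have hclosure : closure (openSimplex a) = f '' stdSimplex ℝ _ := by
    rw [openSimplex_eq_image, closure_image_openStdSimplex]
  have hboundary : closure (openSimplex a) \ openSimplex a
      = f '' (stdSimplex ℝ _ \ openStdSimplex _) := by
    rw [hclosure, openSimplex_eq_image, (hinj.mono fun t ht => ht.2)
      |>.image_sdiff_subset openStdSimplex_subset_stdSimplex]
  refine ⟨hf_bary ▸ openSimplex_eq_image a ▸ mem_image_of_mem f
    stdSimplexBarycenter_mem_openStdSimplex, ?_⟩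
  rw [hboundary, hclosure]
  rintro _ ⟨t, ht, rfl⟩ hne
  obtain ⟨⟨r, s⟩, ⟨hr, hs, hts⟩, huniq⟩ :=
    existsUnique_eq_smul_add_smul_stdSimplexBarycenter ht (by rintro rfl; exact hne hf_bary)
  refine ⟨(f r, s), ⟨mem_image_of_mem f hr, hs, by simp [hts, hf_bary]⟩, ?_⟩
  rintro ⟨_, s'⟩ ⟨⟨r', hr', rfl⟩, hs', hts'⟩
  have hc := openStdSimplex_subset_stdSimplex
    (stdSimplexBarycenter_mem_openStdSimplex (ι := Fin (n + 1)))
  have hcomb := convex_stdSimplex ℝ _ hr'.1 hc (by linarith [hs'.2]) hs'.1 (sub_add_cancel 1 s')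
  have : t = (1 - s') • r' + s' • stdSimplexBarycenter _ :=
    hinj ht.2 hcomb.2 (by rwa [map_add, map_smul, map_smul, hf_bary])
  cases huniq (r', s') ⟨hr', hs', this⟩
  rfl

/-- the barycenter `σ̂` of an open simplex `σ` (`n ≥ 1`) lies in `σ`, and
every point `p ∈ closure σ` with `p ≠ σ̂` has a unique representation
`p = (1 − t) • u + t • σ̂` with `u ∈ ∂σ` and `t ∈ [0, 1)`. -/
theorem stmt_16 (m n : ℕ) (hn : 1 ≤ n) (a : Fin (n + 1) → (Fin m → ℝ))
    (ha : AffineIndependent ℝ a)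
    (bary : Fin m → ℝ) (hbary : bary = ((n : ℝ) + 1)⁻¹ • ∑ i, a i) :
    bary ∈ openSimplex a ∧
    ∀ p ∈ closure (openSimplex a), p ≠ bary →
      ∃! ut : (Fin m → ℝ) × ℝ,
        ut.1 ∈ closure (openSimplex a) \ openSimplex a ∧
        ut.2 ∈ Set.Ico (0:ℝ) 1 ∧
        p = (1 - ut.2) • ut.1 + ut.2 • bary :=
  stmt_16_general m n a ha bary hbary
end
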